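/- arXiv:2002.01203 — 2 statements merged into one kernel-verified Lean document; each statement's English description precedes it below -/
import Mathlib

section
/- For the academic example on ℝ⁸, let w(x) = e₃ + x⁶e₄ + x⁴e₅. Then [e₆, w](x) = e₄ for all x, and for every x ∈ ℝ⁸ the vector e₄ does not lie in span{e₇, e₈, e₆, w(x)}, so D₂ = span{e₇, e₈, e₆, w} is not involutive; moreover [e₇, e₆] = [e₇, w] = [e₇, e₈] = 0 and [e₈, e₆] = [e₈, w] = 0, so e₇ and e₈ are Cauchy characteristic vector fields of D₂, i.e. C(D₂) ⊇ D₁ = span{e₇, e₈}. -/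
/-- The i-th standard basis vector of ℝ⁸ (0-based: `e i` is `e_{i+1}` in the paper's
1-based numbering of coordinates `x¹,…,x⁸`). -/
noncomputable def e (i : Fin 8) : Fin 8 → ℝ := Pi.single i 1

/-- `w(x) = e₃ + x⁶e₄ + x⁴e₅`. -/
noncomputable def acadW : (Fin 8 → ℝ) → (Fin 8 → ℝ) :=
  fun x => e 2 + x 5 • e 3 + x 3 • e 4

/-- The linear part of `acadW`. -/
noncomputable def acadWlin : (Fin 8 → ℝ) →L[ℝ] (Fin 8 → ℝ) :=
  (ContinuousLinearMap.proj 5).smulRight (e 3) + (ContinuousLinearMap.proj 3).smulRight (e 4)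

lemma fderiv_acadW (x : Fin 8 → ℝ) : fderiv ℝ acadW x = acadWlin := by
  have h : acadW = fun y => e 2 + acadWlin y := by
    funext y
    simp [acadW, acadWlin]
    abel
  rw [h]
  exact (acadWlin.hasFDerivAt.const_add (e 2)).fderiv

lemma lie_const_acadW (c : Fin 8 → ℝ) (x : Fin 8 → ℝ) :
    VectorField.lieBracket ℝ (fun _ => c) acadW x = c 5 • e 3 + c 3 • e 4 := by
  simp [VectorField.lieBracket, fderiv_acadW, acadWlin]

/-- For the academic example: `[e₆, w](x) = e₄` for all `x`, and `e₄` never lies in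
`span{e₇, e₈, e₆, w(x)}`, so `D₂ = span{e₇, e₈, e₆, w}` is not involutive; moreover
`[e₇, e₆] = [e₇, w] = [e₇, e₈] = 0` and `[e₈, e₆] = [e₈, w] = 0`, so `e₇` and `e₈` are
Cauchy characteristic vector fields of `D₂`, i.e. `C(D₂) ⊇ D₁ = span{e₇, e₈}`. -/
theorem stmt14 :
    (∀ x : Fin 8 → ℝ, VectorField.lieBracket ℝ (fun _ => e 5) acadW x = e 3) ∧
    (∀ x : Fin 8 → ℝ,
      e 3 ∉ Submodule.span ℝ ({e 6, e 7, e 5, acadW x} : Set (Fin 8 → ℝ))) ∧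
    (∀ x : Fin 8 → ℝ,
      VectorField.lieBracket ℝ (fun _ => e 6) (fun _ => e 5) x = 0 ∧
      VectorField.lieBracket ℝ (fun _ => e 6) acadW x = 0 ∧
      VectorField.lieBracket ℝ (fun _ => e 6) (fun _ => e 7) x = 0 ∧
      VectorField.lieBracket ℝ (fun _ => e 7) (fun _ => e 5) x = 0 ∧
      VectorField.lieBracket ℝ (fun _ => e 7) acadW x = 0) := by
  refine ⟨?_, ?_, ?_⟩
  · intro x
    rw [lie_const_acadW]
    simp [e, Pi.single_apply]
  · intro x h
    -- the linear functional v ↦ v 3 - x 5 * v 2 vanishes on the generators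
    set φ : (Fin 8 → ℝ) →ₗ[ℝ] ℝ :=
      (LinearMap.proj 3 : (Fin 8 → ℝ) →ₗ[ℝ] ℝ) - x 5 • (LinearMap.proj 2) with hφ
    have hsub : ({e 6, e 7, e 5, acadW x} : Set (Fin 8 → ℝ)) ⊆ (LinearMap.ker φ : Set _) := by
      intro v hv
      rcases hv with rfl | rfl | rfl | rfl <;>
        simp [hφ, e, acadW, Pi.single_apply]
    have hle := Submodule.span_le.mpr hsub
    have h0 : φ (e 3) = 0 := hle h
    simp [hφ, e, Pi.single_apply] at h0
  · intro x
    refine ⟨?_, ?_, ?_, ?_, ?_⟩ <;>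
      first
        | (rw [lie_const_acadW]; simp [e, Pi.single_apply])
        | simp [VectorField.lieBracket]
end

section
/- For the academic example on ℝ⁸, let w(x) = e₃ + x⁶e₄ + x⁴e₅. Then [e₆, w](x) = e₄ and [e₄, w](x) = e₅ for all x, and consequently, at every point x ∈ ℝ⁸, span{e₇, e₈, e₆, w(x), e₄, e₅} = span{e₃, e₄, e₅, e₆, e₇, e₈} and has dimension 6; i.e., the second derived flag D₂^{(2)} equals the involutive closure D̄₂ = span{∂_{x³},…,∂_{x⁸}}, and dim D₂^{(i)} = dim D₂ + i for i = 1, 2. -/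
open Module Submodule

theorem VectorField.lieBracket_const_left {𝕜 E : Type*} [NontriviallyNormedField 𝕜]
    [NormedAddCommGroup E] [NormedSpace 𝕜 E] (v : E) (W : E → E) (x : E) :
    lieBracket 𝕜 (fun _ => v) W x = fderiv 𝕜 W x v := by
  simp [lieBracket]

theorem LinearIndependent.finrank_span_image {K M ι : Type*} [DivisionRing K] [AddCommGroup M]
    [Module K M] {v : ι → M} (hv : LinearIndependent K v) (s : Finset ι) :
    finrank K (span K (v '' s)) = s.card := by
  classical
  rw [finrank_span_set_eq_card ((hv.linearIndepOn s).id_image), Set.toFinset_image,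
    Finset.card_image_of_injective _ hv.injective, Finset.toFinset_coe]

theorem linearIndependent_update_single_add {K ι : Type*} [Ring K] [DecidableEq ι]
    (i : ι) {u : ι → K} (hu : u i = 0) :
    LinearIndependent K (Function.update (fun j => Pi.single j (1 : K)) i (Pi.single i 1 + u)) := by
  let T : (ι → K) →ₗ[K] ι → K := LinearMap.id + (LinearMap.proj i).smulRight u
  have hT : LinearMap.ker T = ⊥ := by
    refine LinearMap.ker_eq_bot'.2 fun v hv => ?_
    have hvi : v i = 0 := by simpa [T, hu] using congrFun hv i
    simpa [T, hvi] using hv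
  have hTe : Function.update (fun j => Pi.single j (1 : K)) i (Pi.single i 1 + u) =
      T ∘ fun j => Pi.single j (1 : K) := by
    ext1 j
    rcases eq_or_ne j i with rfl | hj
    · simp [T, add_comm]
    · simp [T, hj]
  rw [hTe]
  exact (Pi.linearIndependent_single_one ι K).map' T hT

lemma hasFDerivAt_acadW (x : Fin 8 → ℝ) :
    HasFDerivAt acadW
      ((ContinuousLinearMap.proj 5).smulRight (e 3) + (ContinuousLinearMap.proj 3).smulRight (e 4) :
        (Fin 8 → ℝ) →L[ℝ] Fin 8 → ℝ) x := by
  have := (((hasFDerivAt_apply (𝕜 := ℝ) 5 x).smul_const (e 3)).add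
    ((hasFDerivAt_apply (𝕜 := ℝ) 3 x).smul_const (e 4))).const_add (e 2)
  simpa [acadW, add_assoc] using this

lemma fderiv_acadW_apply (x v : Fin 8 → ℝ) :
    fderiv ℝ acadW x v = v 5 • e 3 + v 3 • e 4 := by
  simp [(hasFDerivAt_acadW x).fderiv]

lemma lieBracket_e_acadW (i : Fin 8) (x : Fin 8 → ℝ) :
    VectorField.lieBracket ℝ (fun _ => e i) acadW x = e i 5 • e 3 + e i 3 • e 4 := by
  rw [VectorField.lieBracket_const_left, fderiv_acadW_apply]

noncomputable def acadFrame (x : Fin 8 → ℝ) : Fin 8 → Fin 8 → ℝ :=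
  Function.update e 2 (acadW x)

lemma linearIndependent_acadFrame (x : Fin 8 → ℝ) : LinearIndependent ℝ (acadFrame x) := by
  have hu : (x 5 • e 3 + x 3 • e 4) 2 = 0 := by simp [e]
  have hw : acadW x = Pi.single 2 1 + (x 5 • e 3 + x 3 • e 4) := by simp [acadW, e, add_assoc]
  rw [acadFrame, hw]
  exact linearIndependent_update_single_add 2 hu

lemma finrank_span_e_two_to_seven :
    finrank ℝ (span ℝ ({e 2, e 3, e 4, e 5, e 6, e 7} : Set (Fin 8 → ℝ))) = 6 := by
  rw [show ({e 2, e 3, e 4, e 5, e 6, e 7} : Set (Fin 8 → ℝ)) =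
      e '' ↑({2, 3, 4, 5, 6, 7} : Finset (Fin 8)) by simp [Set.image_insert_eq]]
  exact (Pi.linearIndependent_single_one (Fin 8) ℝ).finrank_span_image _

lemma finrank_span_acadFrame_image (x : Fin 8 → ℝ) (s : Finset (Fin 8)) :
    finrank ℝ (span ℝ (acadFrame x '' s)) = s.card :=
  (linearIndependent_acadFrame x).finrank_span_image s

lemma acadW_mem_span (x : Fin 8 → ℝ) : acadW x ∈ span ℝ {e 2, e 3, e 4, e 5, e 6, e 7} :=
  add_mem (add_mem (subset_span (by simp)) (smul_mem _ _ (subset_span (by simp))))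
    (smul_mem _ _ (subset_span (by simp)))

lemma span_acadW_eq (x : Fin 8 → ℝ) :
    span ℝ {e 6, e 7, e 5, acadW x, e 3, e 4} = span ℝ {e 2, e 3, e 4, e 5, e 6, e 7} := by
  have hle :
      span ℝ {e 6, e 7, e 5, acadW x, e 3, e 4} ≤ span ℝ {e 2, e 3, e 4, e 5, e 6, e 7} := by
    rw [span_le]
    simp [Set.insert_subset_iff, acadW_mem_span, mem_span_of_mem]
  refine eq_of_le_of_finrank_eq hle ?_
  rw [finrank_span_e_two_to_seven, show ({e 6, e 7, e 5, acadW x, e 3, e 4} : Set (Fin 8 → ℝ)) =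
      acadFrame x '' ↑({6, 7, 5, 2, 3, 4} : Finset (Fin 8)) by
    simp [acadFrame, Set.image_insert_eq], finrank_span_acadFrame_image]
  rfl

/-- For the academic example: `[e₆, w](x) = e₄` and `[e₄, w](x) = e₅` for all `x`, and at
every point `x`, `span{e₇, e₈, e₆, w(x), e₄, e₅} = span{e₃, e₄, e₅, e₆, e₇, e₈}` has
dimension 6; i.e. the second derived flag `D₂^{(2)}` equals the involutive closure
`D̄₂ = span{∂_{x³},…,∂_{x⁸}}`, and `dim D₂^{(i)} = dim D₂ + i` for `i = 1, 2`. -/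
theorem stmt15 :
    (∀ x : Fin 8 → ℝ, VectorField.lieBracket ℝ (fun _ => e 5) acadW x = e 3) ∧
    (∀ x : Fin 8 → ℝ, VectorField.lieBracket ℝ (fun _ => e 3) acadW x = e 4) ∧
    (∀ x : Fin 8 → ℝ,
      Submodule.span ℝ ({e 6, e 7, e 5, acadW x, e 3, e 4} : Set (Fin 8 → ℝ)) =
        Submodule.span ℝ ({e 2, e 3, e 4, e 5, e 6, e 7} : Set (Fin 8 → ℝ)) ∧
      Module.finrank ℝ
        (Submodule.span ℝ ({e 6, e 7, e 5, acadW x, e 3, e 4} : Set (Fin 8 → ℝ))) = 6 ∧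
      Module.finrank ℝ
        (Submodule.span ℝ ({e 6, e 7, e 5, acadW x} : Set (Fin 8 → ℝ))) = 4 ∧
      Module.finrank ℝ
        (Submodule.span ℝ ({e 6, e 7, e 5, acadW x, e 3} : Set (Fin 8 → ℝ))) = 5) := by
  refine ⟨fun x => ?_, fun x => ?_, fun x => ⟨span_acadW_eq x, ?_, ?_, ?_⟩⟩
  · rw [lieBracket_e_acadW]
    simp [e]
  · rw [lieBracket_e_acadW]
    simp [e]
  · rw [span_acadW_eq, finrank_span_e_two_to_seven]
  · rw [show ({e 6, e 7, e 5, acadW x} : Set (Fin 8 → ℝ)) =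
      acadFrame x '' ↑({6, 7, 5, 2} : Finset (Fin 8)) by simp [acadFrame, Set.image_insert_eq],
      finrank_span_acadFrame_image]
    rfl
  · rw [show ({e 6, e 7, e 5, acadW x, e 3} : Set (Fin 8 → ℝ)) =
      acadFrame x '' ↑({6, 7, 5, 2, 3} : Finset (Fin 8)) by simp [acadFrame, Set.image_insert_eq],
      finrank_span_acadFrame_image]
    rfl
end
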